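/- arXiv:2203.12972 — 2 statements merged into one kernel-verified Lean document; each statement's English description precedes it below -/
import Mathlib

section
/- Let c, p, q > 0 and υ₁, υ₂ > 0, and let a, b be given by a = (p·υ₂² − υ₁² + υ₂² − c)/(υ₁·υ₂) and b = (p·υ₂² + q·υ₁² − c − 1)/(υ₁·υ₂). Set f(x,y) = c + x² + a·x·y − (p+1)·y² and g(x,y) = −1 + (q+1)·x² + (a−b)·x·y − y². Then the determinant of the Jacobian matrix of the vector field (x·f(x,y), y·g(x,y)) at the point (υ₁, υ₂) equals 2·υ₁²·(c·q + c + 1) + 2·υ₂²·(p + c + 1), which is strictly positive. -/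
lemma cubic_deriv (A B C D t : ℝ) :
    deriv (fun x : ℝ => A * x ^ 3 + B * x ^ 2 + C * x + D) t
      = 3 * A * t ^ 2 + 2 * B * t + C := by
  have h : HasDerivAt (fun x : ℝ => A * x ^ 3 + B * x ^ 2 + C * x + D)
      (3 * A * t ^ 2 + 2 * B * t + C) t := by
    have h3 : HasDerivAt (fun x : ℝ => x ^ 3) (3 * t ^ 2) t := by
      simpa using hasDerivAt_pow 3 t
    have h2 : HasDerivAt (fun x : ℝ => x ^ 2) (2 * t) t := by
      simpa using hasDerivAt_pow 2 t
    have : HasDerivAt (fun x : ℝ => A * x ^ 3 + B * x ^ 2 + C * x + D)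
        (A * (3 * t ^ 2) + B * (2 * t) + C * 1) t := (((h3.const_mul A).add (h2.const_mul B)).add
      ((hasDerivAt_id t).const_mul C)).add_const D
    convert this using 1
    ring
  exact h.deriv

theorem jacobian_det_positive (c p q υ₁ υ₂ : ℝ)
    (hc : 0 < c) (hp : 0 < p) (hq : 0 < q) (h1 : 0 < υ₁) (h2 : 0 < υ₂)
    (a b : ℝ)
    (ha : a = (p * υ₂ ^ 2 - υ₁ ^ 2 + υ₂ ^ 2 - c) / (υ₁ * υ₂))
    (hb : b = (p * υ₂ ^ 2 + q * υ₁ ^ 2 - c - 1) / (υ₁ * υ₂))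
    (f g : ℝ → ℝ → ℝ)
    (hf : ∀ x y, f x y = c + x ^ 2 + a * x * y - (p + 1) * y ^ 2)
    (hg : ∀ x y, g x y = -1 + (q + 1) * x ^ 2 + (a - b) * x * y - y ^ 2) :
    deriv (fun x => x * f x υ₂) υ₁ * deriv (fun y => y * g υ₁ y) υ₂ -
        deriv (fun y => υ₁ * f υ₁ y) υ₂ * deriv (fun x => υ₂ * g x υ₂) υ₁ =
      2 * υ₁ ^ 2 * (c * q + c + 1) + 2 * υ₂ ^ 2 * (p + c + 1) ∧
    0 < 2 * υ₁ ^ 2 * (c * q + c + 1) + 2 * υ₂ ^ 2 * (p + c + 1) := by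
  constructor
  · have e1 : (fun x => x * f x υ₂)
        = fun x : ℝ => 1 * x ^ 3 + (a * υ₂) * x ^ 2 + (c - (p + 1) * υ₂ ^ 2) * x + 0 := by
      funext x; rw [hf]; ring
    have e2 : (fun y => y * g υ₁ y)
        = fun y : ℝ => (-1) * y ^ 3 + ((a - b) * υ₁) * y ^ 2 + (-1 + (q + 1) * υ₁ ^ 2) * y + 0 := by
      funext y; rw [hg]; ring
    have e3 : (fun y => υ₁ * f υ₁ y)
        = fun y : ℝ => 0 * y ^ 3 + (-(υ₁ * (p + 1))) * y ^ 2 + (υ₁ * a * υ₁) * y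
            + (υ₁ * c + υ₁ * υ₁ ^ 2) := by
      funext y; rw [hf]; ring
    have e4 : (fun x => υ₂ * g x υ₂)
        = fun x : ℝ => 0 * x ^ 3 + (υ₂ * (q + 1)) * x ^ 2 + (υ₂ * (a - b) * υ₂) * x
            + (-υ₂ - υ₂ * υ₂ ^ 2) := by
      funext x; rw [hg]; ring
    rw [e1, e2, e3, e4, cubic_deriv, cubic_deriv, cubic_deriv, cubic_deriv]
    have h1' := h1.ne'
    have h2' := h2.ne'
    subst ha hb
    field_simp
    ring
  · positivity
end

section
/- Let c₀, q₀ > 0 and b₀ ∈ ℝ, and set p₀ = c₀·q₀ and a₀ = b₀·(c₀·q₀ − c₀ + 1)/(2·c₀·q₀). Define the vector field X(x,y) = ( x·(c₀ + x² + a₀·x·y − (p₀+1)·y²), y·(−1 + (q₀+1)·x² + (a₀−b₀)·x·y − y²) ) and the function H(x,y) = ( q₀·(x² + c₀·(y² + 1)) − b₀·x·y ) / (x·y^{c₀})^{2/(c₀·q₀ + c₀ + 1)} for x > 0, y > 0. Then H is a first integral of X on the open first quadrant: ∂ₓH(x,y)·X₁(x,y) + ∂_yH(x,y)·X₂(x,y)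 = 0 for all x, y > 0. -/
theorem first_integral (c₀ q₀ b₀ : ℝ) (hc : 0 < c₀) (hq : 0 < q₀)
    (p₀ a₀ : ℝ) (hp : p₀ = c₀ * q₀)
    (ha : a₀ = b₀ * (c₀ * q₀ - c₀ + 1) / (2 * c₀ * q₀))
    (X₁ X₂ H : ℝ → ℝ → ℝ)
    (hX₁ : ∀ x y, X₁ x y = x * (c₀ + x ^ 2 + a₀ * x * y - (p₀ + 1) * y ^ 2))
    (hX₂ : ∀ x y, X₂ x y = y * (-1 + (q₀ + 1) * x ^ 2 + (a₀ - b₀) * x * y - y ^ 2))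
    (hH : ∀ x y, H x y =
      (q₀ * (x ^ 2 + c₀ * (y ^ 2 + 1)) - b₀ * x * y) /
        (x * y ^ c₀) ^ (2 / (c₀ * q₀ + c₀ + 1))) :
    ∀ x y : ℝ, 0 < x → 0 < y →
      deriv (fun t => H t y) x * X₁ x y + deriv (fun t => H x t) y * X₂ x y = 0 := by
  intro x y hx hy
  set k : ℝ := 2 / (c₀ * q₀ + c₀ + 1) with hk
  have hd : (0:ℝ) < c₀ * q₀ + c₀ + 1 := by positivity
  -- key rewriting : for s,t > 0, H s t in product form
  have hHst : ∀ s t : ℝ, 0 < s → 0 < t → H s t =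
      (q₀ * (s ^ 2 + c₀ * (t ^ 2 + 1)) - b₀ * s * t) *
        (s ^ (-k) * t ^ (-(c₀ * k))) := by
    intro s t hs ht
    rw [hH]
    have h1 : (s * t ^ c₀) ^ k = s ^ k * t ^ (c₀ * k) := by
      rw [Real.mul_rpow hs.le (Real.rpow_nonneg ht.le _), ← Real.rpow_mul ht.le]
    rw [h1, Real.rpow_neg hs.le, Real.rpow_neg ht.le, div_eq_mul_inv, mul_inv]
  -- derivative in x
  have hDx : HasDerivAt (fun t => H t y)
      ((q₀ * (2 * x) - b₀ * y) * (x ^ (-k) * y ^ (-(c₀ * k))) +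
        (q₀ * (x ^ 2 + c₀ * (y ^ 2 + 1)) - b₀ * x * y) *
          (-k * x ^ (-k - 1) * y ^ (-(c₀ * k)))) x := by
    have h1 : HasDerivAt (fun t : ℝ => q₀ * (t ^ 2 + c₀ * (y ^ 2 + 1)) - b₀ * t * y)
        (q₀ * (2 * x) - b₀ * y) x := by
      have := (((hasDerivAt_pow 2 x).add_const (c₀ * (y ^ 2 + 1))).const_mul q₀).sub
        (((hasDerivAt_id x).const_mul b₀).mul_const y)
      simpa [Pi.sub_def, mul_assoc, mul_comm, mul_left_comm] using this
    have h2 : HasDerivAt (fun t : ℝ => t ^ (-k) * y ^ (-(c₀ * k)))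
        (-k * x ^ (-k - 1) * y ^ (-(c₀ * k))) x :=
      (Real.hasDerivAt_rpow_const (Or.inl hx.ne')).mul_const _
    have h3 := h1.mul h2
    refine h3.congr_of_eventuallyEq ?_
    filter_upwards [eventually_gt_nhds hx] with t ht
    exact hHst t y ht hy
  -- derivative in y
  have hDy : HasDerivAt (fun t => H x t)
      ((q₀ * (c₀ * (2 * y)) - b₀ * x) * (x ^ (-k) * y ^ (-(c₀ * k))) +
        (q₀ * (x ^ 2 + c₀ * (y ^ 2 + 1)) - b₀ * x * y) *
          (x ^ (-k) * (-(c₀ * k) * y ^ (-(c₀ * k) - 1)))) y := by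
    have h1 : HasDerivAt (fun t : ℝ => q₀ * (x ^ 2 + c₀ * (t ^ 2 + 1)) - b₀ * x * t)
        (q₀ * (c₀ * (2 * y)) - b₀ * x) y := by
      have := ((((hasDerivAt_pow 2 y).add_const 1).const_mul c₀).const_add
        (x ^ 2)).const_mul q₀ |>.sub ((hasDerivAt_id y).const_mul (b₀ * x))
      simpa [Pi.sub_def, mul_assoc, mul_comm, mul_left_comm] using this
    have h2 : HasDerivAt (fun t : ℝ => x ^ (-k) * t ^ (-(c₀ * k)))
        (x ^ (-k) * (-(c₀ * k) * y ^ (-(c₀ * k) - 1))) y :=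
      (Real.hasDerivAt_rpow_const (Or.inl hy.ne')).const_mul _
    have h3 := h1.mul h2
    refine h3.congr_of_eventuallyEq ?_
    filter_upwards [eventually_gt_nhds hy] with t ht
    exact hHst x t hx ht
  rw [hDx.deriv, hDy.deriv, hX₁, hX₂]
  have hxk : x ^ (-k - 1) = x ^ (-k) * x⁻¹ := by
    rw [show -k - 1 = -k + -1 by ring, Real.rpow_add hx, Real.rpow_neg_one]
  have hyk : y ^ (-(c₀ * k) - 1) = y ^ (-(c₀ * k)) * y⁻¹ := by
    rw [show -(c₀ * k) - 1 = -(c₀ * k) + -1 by ring, Real.rpow_add hy, Real.rpow_neg_one]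
  rw [hxk, hyk, hp, ha, hk]
  field_simp
  ring
end
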